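/- For any string S and any 1 ≤ i ≤ |S|, the sequence obtained from PD(S[i..]) by deleting its first entry and setting to 0 the entry at every front pointer equals PD(S[i+1..]). -/
import Mathlib


open List

inductive Shape where
  | nil : Shape
  | node : Shape → Shape → Shape
deriving DecidableEq

inductive BTree (α : Type*) where
  | nil : BTree α
  | node : BTree α → α → BTree α → BTree α

def BTree.shape {α : Type*} : BTree α → Shape
  | .nil => .nil
  | .node l _ r => .node l.shape r.shape

def BTree.rootVal {α : Type*} : BTree α → Option α
  | .nil => none
  | .node _ v _ => some v

section
variable {α : Type*} [LinearOrder α] [Inhabited α]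

/-- Parent-distance value at 1-based position `i` of `S`. -/
def pdVal (S : List α) (i : ℕ) : ℕ :=
  let J := (Finset.Ico 1 i).filter (fun j => S.getD (j-1) default ≤ S.getD (i-1) default)
  if h : J.Nonempty then i - J.max' h else 0

/-- Parent-distance encoding of `S` (1-based positions). -/
def PD (S : List α) : List ℕ := (List.range S.length).map (fun k => pdVal S (k+1))

/-- 0-based index of the leftmost minimum of `S`. -/
def leftmostMinIdx (S : List α) : ℕ :=
  ((List.range S.length).argmin (fun j => S.getD j default)).getD 0

def CTaux : ℕ → List α → BTree α
  | 0, _ => .nil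
  | (n+1), S =>
    if S.isEmpty then .nil else
      let i := leftmostMinIdx S
      .node (CTaux n (S.take i)) (S.getD i default) (CTaux n (S.drop (i+1)))

/-- The (labeled) Cartesian tree of `S`. -/
def CT (S : List α) : BTree α := CTaux S.length S

/-- Front pointers of a sequence `u` of naturals (1-based positions `k ≥ 2` with `k - u[k] = 1`). -/
def frontPointers (u : List ℕ) : Finset ℕ :=
  (Finset.Icc 2 u.length).filter (fun k => k - u.getD (k-1) 0 = 1)

/-- `FP(S)[i]`: number of front pointers of `PD(S[i..])` (1-based `i`). -/
def FPval (S : List α) (i : ℕ) : ℕ := (frontPointers (PD (S.drop (i-1)))).card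

/-- The FP encoding of `S`. -/
def FP (S : List α) : List ℕ := (List.range S.length).map (fun k => FPval S (k+1))

end

/-- The suffix-link transform: drop the first entry and zero out the entry at
every front pointer (positions are 1-based in the original sequence). -/
def slink (u : List ℕ) : List ℕ :=
  (List.range (u.length - 1)).map
    (fun p => if (p + 2) - u.getD (p + 1) 0 = 1 then 0 else u.getD (p + 1) 0)


lemma pd_key {α : Type*} [LinearOrder α] [Inhabited α] (T : List α) (p : ℕ) :
    (if (p+2) - pdVal T (p+2) = 1 then 0 else pdVal T (p+2)) = pdVal (T.drop 1) (p+1) := by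
  classical
  unfold pdVal
  set A := (Finset.Ico 1 (p+2)).filter
      (fun j => T.getD (j-1) default ≤ T.getD (p+2-1) default) with hAdef
  set B := (Finset.Ico 1 (p+1)).filter
      (fun j => (T.drop 1).getD (j-1) default ≤ (T.drop 1).getD (p+1-1) default) with hBdef
  have hdrop : ∀ k : ℕ, (T.drop 1).getD k default = T.getD (k+1) default := by
    intro k
    simp [List.getD_eq_getElem?_getD, List.getElem?_drop, Nat.add_comm 1 k]
  have hmem : ∀ j, j ∈ B ↔ 1 ≤ j ∧ j + 1 ∈ A := by
    intro j
    simp only [hAdef, hBdef, Finset.mem_filter, Finset.mem_Ico]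
    constructor
    · rintro ⟨⟨hj1, hj2⟩, hle⟩
      refine ⟨hj1, ⟨by omega, by omega⟩, ?_⟩
      have : j + 1 - 1 = (j - 1) + 1 := by omega
      rw [this]
      rw [hdrop, hdrop] at hle
      have h2 : p + 1 - 1 + 1 = p + 2 - 1 := by omega
      rw [h2] at hle
      exact hle
    · rintro ⟨hj1, ⟨_, hj2⟩, hle⟩
      refine ⟨⟨hj1, by omega⟩, ?_⟩
      rw [hdrop, hdrop]
      have : j - 1 + 1 = j + 1 - 1 := by omega
      rw [this]
      have h2 : p + 1 - 1 + 1 = p + 2 - 1 := by omega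
      rw [h2]
      exact hle
  by_cases hA : A.Nonempty
  · by_cases h2 : 2 ≤ A.max' hA
    · -- B nonempty with max' = A.max' - 1
      have hmax_mem : A.max' hA ∈ A := A.max'_mem hA
      have hmax_lt : A.max' hA < p + 2 := by
        have := Finset.filter_subset _ (Finset.Ico 1 (p+2)) hmax_mem
        exact (Finset.mem_Ico.mp this).2
      have hBmem : A.max' hA - 1 ∈ B := by
        rw [hmem]
        constructor
        · omega
        · have : A.max' hA - 1 + 1 = A.max' hA := by omega
          rw [this]; exact hmax_mem
      have hB : B.Nonempty := ⟨_, hBmem⟩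
      have hBmax : B.max' hB = A.max' hA - 1 := by
        apply Nat.le_antisymm
        · apply Finset.max'_le
          intro b hb
          rw [hmem] at hb
          have := Finset.le_max' A _ hb.2
          omega
        · exact Finset.le_max' B _ hBmem
      rw [dif_pos hA, dif_pos hB, hBmax]
      have hcond : p + 2 - (p + 2 - A.max' hA) = A.max' hA := by omega
      rw [if_neg (by omega)]
      omega
    · -- A.max' = 1, so B is empty
      have h1 : A.max' hA = 1 := by
        have hmax_mem := A.max'_mem hA
        have := Finset.filter_subset _ (Finset.Ico 1 (p+2)) hmax_mem
        have := (Finset.mem_Ico.mp this).1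
        omega
      have hB : ¬ B.Nonempty := by
        rintro ⟨b, hb⟩
        rw [hmem] at hb
        have := Finset.le_max' A _ hb.2
        omega
      rw [dif_pos hA, dif_neg hB, h1]
      rw [if_pos (by omega)]
  · have hB : ¬ B.Nonempty := by
      rintro ⟨b, hb⟩
      rw [hmem] at hb
      exact hA ⟨_, hb.2⟩
    rw [dif_neg hA, dif_neg hB]
    rw [if_neg (by omega)]

lemma slink_PD {α : Type*} [LinearOrder α] [Inhabited α] (T : List α) :
    slink (PD T) = PD (T.drop 1) := by
  unfold slink PD
  simp only [List.length_map, List.length_range, List.length_drop]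
  apply List.map_congr_left
  intro p hp
  rw [List.mem_range] at hp
  have hgetD : (List.map (fun k => pdVal T (k+1)) (List.range T.length)).getD (p+1) 0
      = pdVal T (p+2) := by
    have hlt : p + 1 < T.length := by omega
    simp [List.getD_eq_getElem?_getD, List.getElem?_map, List.getElem?_range, hlt]
  rw [hgetD]
  exact pd_key T p

set_option linter.unusedVariables false in
/-- Applying the suffix-link transform to `PD(S[i..])` yields `PD(S[i+1..])`. -/
theorem stmt17 {α : Type*} [LinearOrder α] [Inhabited α] (S : List α) (i : ℕ)
    (h1 : 1 ≤ i) (h2 : i ≤ S.length) :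
    slink (PD (S.drop (i-1))) = PD (S.drop i) := by
  have hd : S.drop i = (S.drop (i-1)).drop 1 := by
    rw [List.drop_drop]
    congr 1
    omega
  rw [hd]
  exact slink_PD _
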